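/- Let a₁ = (1/2)√(3/2), a₂ = (1/2)(18 − 7√6) and 𝐖(ρ) = −1/(a₁ρ² + a₂). There exists a constant C > 0 such that for all T ∈ [1/2, 3/2]: ‖ T 𝐖(√T |·|) − 𝐖(|·|) ‖ ≤ C |T − 1|, where T𝐖(√T|·|) − 𝐖(|·|) denotes the radial function x ↦ T𝐖(√T|x|) − 𝐖(|x|) on ℝ⁷ and ‖u‖² := ‖Δu‖²_{L²(ℝ⁷)} + ‖Δ²u‖²_{L²(ℝ⁷)} (all these norms are finite since 𝐖 is smooth with Δ𝐖(|x|) = O(⟨x⟩^{−4}) and Δ²𝐖(|x|) = O(⟨x⟩^{−6})). -/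

import Mathlib

open MeasureTheory Set
open scoped ENNReal

noncomputable section

abbrev E7 := EuclideanSpace ℝ (Fin 7)

/-- The Laplacian on `ℝ⁷`: `Δf(x) = ∑ᵢ ∂ᵢ²f(x)`. -/
def lap (f : E7 → ℝ) (x : E7) : ℝ :=
  ∑ i : Fin 7, iteratedFDeriv ℝ 2 f x ![EuclideanSpace.single i 1, EuclideanSpace.single i 1]

/-- `‖f‖² = ‖Δf‖²_{L²(ℝ⁷)} + ‖Δ²f‖²_{L²(ℝ⁷)}`. -/
def HnormSq (f : E7 → ℝ) : ℝ≥0∞ :=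
  (∫⁻ x, ENNReal.ofReal ((lap f x)^2)) + (∫⁻ x, ENNReal.ofReal ((lap (lap f) x)^2))

/-- `‖f‖ = (‖Δf‖² + ‖Δ²f‖²)^{1/2}`. -/
def Hnorm (f : E7 → ℝ) : ℝ≥0∞ := HnormSq f ^ ((1:ℝ)/2)

/-- `a₁ = (1/2)√(3/2)`. -/
def a1 : ℝ := (1/2) * Real.sqrt (3/2)

/-- `a₂ = (1/2)(18 − 7√6)`. -/
def a2 : ℝ := (1/2) * (18 - 7 * Real.sqrt 6)

/-- The Weinkove profile `𝐖(ρ) = −1/(a₁ρ² + a₂)`. -/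
def Wprof (ρ : ℝ) : ℝ := -(1 / (a1 * ρ^2 + a2))

lemma a1_pos : 0 < a1 := by
  have : 0 < Real.sqrt (3/2) := Real.sqrt_pos.mpr (by norm_num)
  unfold a1; linarith

lemma a2_pos : 0 < a2 := by
  have h6 : Real.sqrt 6 < 18/7 := by
    rw [show (18:ℝ)/7 = Real.sqrt ((18/7)^2) from (Real.sqrt_sq (by norm_num)).symm]
    exact Real.sqrt_lt_sqrt (by norm_num) (by norm_num)
  unfold a2; nlinarith

/-- basic inverse power building block -/
def P (c : ℝ) (k : ℕ) (s : ℝ) : ℝ := ((a1*s + c)^k)⁻¹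

lemma denom_pos {c s : ℝ} (hc : 0 < c) (hs : 0 ≤ s) : 0 < a1*s + c := by
  have := a1_pos; nlinarith

lemma P_pos {c s : ℝ} (hc : 0 < c) (hs : 0 ≤ s) (k : ℕ) : 0 < P c k s := by
  have := denom_pos hc hs; unfold P; positivity

lemma hasDerivAt_P (c : ℝ) (hc : 0 < c) (k : ℕ) {s : ℝ} (hs : 0 ≤ s) :
    HasDerivAt (P c k) (-((k:ℝ)*a1) * P c (k+1) s) s := by
  have hA : 0 < a1*s + c := denom_pos hc hs
  have hlin : HasDerivAt (fun t : ℝ => a1*t + c) a1 s := by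
    simpa using ((hasDerivAt_id s).const_mul a1).add_const c
  have h := (hlin.pow k).inv (pow_ne_zero k hA.ne')
  refine h.congr_deriv (Eq.symm ?_)
  simp only [Pi.pow_apply]
  unfold P
  rcases k with _ | m
  · simp
  · have hne : a1*s + c ≠ 0 := hA.ne'
    push_cast
    field_simp
    ring

lemma contDiffAt_P (c : ℝ) (hc : 0 < c) (k : ℕ) {s : ℝ} (hs : 0 ≤ s) :
    ContDiffAt ℝ 2 (P c k) s := by
  have hA : 0 < a1*s + c := denom_pos hc hs
  have h1 : ContDiffAt ℝ 2 (fun t : ℝ => (a1*t + c)^k) s :=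
    ((contDiffAt_const.mul contDiffAt_id).add contDiffAt_const).pow k
  exact h1.inv (pow_ne_zero k hA.ne')

lemma lap_radial (F F' F'' : ℝ → ℝ)
    (hF' : ∀ s, 0 ≤ s → HasDerivAt F (F' s) s)
    (hF'' : ∀ s, 0 ≤ s → HasDerivAt F' (F'' s) s)
    (hF2 : ∀ s, 0 ≤ s → ContDiffAt ℝ 2 F s)
    (x : E7) :
    lap (fun y => F (‖y‖^2)) x = 14 * F' (‖x‖^2) + 4 * ‖x‖^2 * F'' (‖x‖^2) := by
  have hq : ∀ y : E7, HasFDerivAt (fun z : E7 => ‖z‖^2) ((2:ℕ) • innerSL ℝ y) y :=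
    fun y => (hasStrictFDerivAt_norm_sq y).hasFDerivAt
  have hd1 : ∀ y : E7, HasFDerivAt (fun z : E7 => F (‖z‖^2))
      (F' (‖y‖^2) • ((2:ℕ) • innerSL ℝ y)) y :=
    fun y => (hF' _ (sq_nonneg _)).comp_hasFDerivAt y (hq y)
  have hfd : fderiv ℝ (fun z : E7 => F (‖z‖^2))
      = fun y => F' (‖y‖^2) • ((2:ℕ) • innerSL ℝ y) :=
    funext fun y => (hd1 y).fderiv
  have hcd : ContDiffAt ℝ 2 (fun z : E7 => F (‖z‖^2)) x :=
    (hF2 _ (sq_nonneg _)).comp x ((contDiff_norm_sq (𝕜 := ℝ) (n := 2)).contDiffAt)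
  have hdiff : DifferentiableAt ℝ (fderiv ℝ (fun z : E7 => F (‖z‖^2))) x :=
    (hcd.fderiv_right (m := 1) (by norm_num)).differentiableAt (by norm_num)
  have key : ∀ v : E7, ‖v‖^2 = 1 →
      iteratedFDeriv ℝ 2 (fun z : E7 => F (‖z‖^2)) x ![v, v]
        = 2 * F' (‖x‖^2) + 4 * F'' (‖x‖^2) * (inner ℝ x v : ℝ)^2 := by
    intro v hv
    rw [iteratedFDeriv_two_apply]
    simp only [Matrix.cons_val_zero, Matrix.cons_val_one, Matrix.head_cons]
    have h2 : fderiv ℝ (fderiv ℝ (fun z : E7 => F (‖z‖^2))) x v v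
        = fderiv ℝ (fun y : E7 => fderiv ℝ (fun z : E7 => F (‖z‖^2)) y v) x v := by
      rw [fderiv_clm_apply hdiff (differentiableAt_const v)]
      simp
    rw [h2]
    have hfun : (fun y : E7 => fderiv ℝ (fun z : E7 => F (‖z‖^2)) y v)
        = fun y : E7 => F' (‖y‖^2) * (2 * (inner ℝ v y : ℝ)) := by
      funext y
      rw [hfd]
      simp only [ContinuousLinearMap.smul_apply, innerSL_apply_apply, smul_eq_mul, nsmul_eq_mul]
      rw [real_inner_comm]
      push_cast
      ring
    rw [hfun]
    have ha : HasFDerivAt (fun y : E7 => F' (‖y‖^2))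
        (F'' (‖x‖^2) • ((2:ℕ) • innerSL ℝ x)) x :=
      (hF'' _ (sq_nonneg _)).comp_hasFDerivAt x (hq x)
    have hb : HasFDerivAt (fun y : E7 => (2:ℝ) * (inner ℝ v y : ℝ))
        ((2:ℝ) • innerSL ℝ v) x := ((innerSL ℝ v).hasFDerivAt).const_mul 2
    have hab := (ha.mul hb).fderiv
    rw [show (fun y : E7 => F' (‖y‖^2) * (2 * inner ℝ v y))
      = (fun y : E7 => F' (‖y‖^2)) * (fun y : E7 => 2 * inner ℝ v y) from rfl, hab]
    simp only [ContinuousLinearMap.add_apply, ContinuousLinearMap.smul_apply, innerSL_apply_apply,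
      smul_eq_mul, nsmul_eq_mul]
    rw [real_inner_self_eq_norm_sq, hv, real_inner_comm v x]
    push_cast
    ring
  unfold lap
  have hsum : ∀ i : Fin 7,
      iteratedFDeriv ℝ 2 (fun z : E7 => F (‖z‖^2)) x
        ![EuclideanSpace.single i 1, EuclideanSpace.single i 1]
      = 2 * F' (‖x‖^2) + 4 * F'' (‖x‖^2) * (x i)^2 := by
    intro i
    rw [key (EuclideanSpace.single i 1) (by rw [EuclideanSpace.norm_single]; norm_num)]
    rw [EuclideanSpace.inner_single_right]
    norm_num
  rw [Finset.sum_congr rfl (fun i _ => hsum i)]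
  rw [Finset.sum_add_distrib, Finset.sum_const]
  have hx2 : ∑ i : Fin 7, (x i)^2 = ‖x‖^2 := by
    rw [EuclideanSpace.norm_eq, Real.sq_sqrt (by positivity)]
    simp [Real.norm_eq_abs, sq_abs]
  rw [← Finset.mul_sum, hx2]
  simp
  ring

def Fb (b s : ℝ) : ℝ := -(P b 1 s) + P a2 1 s
def F1 (b s : ℝ) : ℝ := a1 * P b 2 s - a1 * P a2 2 s
def F2 (b s : ℝ) : ℝ := -(2*a1^2 * P b 3 s) + 2*a1^2 * P a2 3 s
def F3 (b s : ℝ) : ℝ := 6*a1^3 * P b 4 s - 6*a1^3 * P a2 4 s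
def F4 (b s : ℝ) : ℝ := -(24*a1^4 * P b 5 s) + 24*a1^4 * P a2 5 s
def Gb (b s : ℝ) : ℝ := 14 * F1 b s + 4*s*F2 b s
def G1 (b s : ℝ) : ℝ := 18 * F2 b s + 4*s*F3 b s
def G2 (b s : ℝ) : ℝ := 22 * F3 b s + 4*s*F4 b s
def Kb (b s : ℝ) : ℝ := 14 * G1 b s + 4*s*G2 b s

variable {b s : ℝ}

lemma hasDerivAt_Fb (hb : 0 < b) (hs : 0 ≤ s) : HasDerivAt (Fb b) (F1 b s) s := by
  have h := ((hasDerivAt_P b hb 1 hs).neg).add (hasDerivAt_P a2 a2_pos 1 hs)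
  refine h.congr_deriv (Eq.symm ?_)
  unfold F1; push_cast; ring

lemma hasDerivAt_F1 (hb : 0 < b) (hs : 0 ≤ s) : HasDerivAt (F1 b) (F2 b s) s := by
  have h := ((hasDerivAt_P b hb 2 hs).const_mul a1).sub ((hasDerivAt_P a2 a2_pos 2 hs).const_mul a1)
  refine h.congr_deriv (Eq.symm ?_)
  unfold F2; push_cast; ring

lemma hasDerivAt_F2 (hb : 0 < b) (hs : 0 ≤ s) : HasDerivAt (F2 b) (F3 b s) s := by
  have h := (((hasDerivAt_P b hb 3 hs).const_mul (2*a1^2)).neg).add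
    ((hasDerivAt_P a2 a2_pos 3 hs).const_mul (2*a1^2))
  refine h.congr_deriv (Eq.symm ?_)
  unfold F3; push_cast; ring

lemma hasDerivAt_F3 (hb : 0 < b) (hs : 0 ≤ s) : HasDerivAt (F3 b) (F4 b s) s := by
  have h := (((hasDerivAt_P b hb 4 hs).const_mul (6*a1^3))).sub
    ((hasDerivAt_P a2 a2_pos 4 hs).const_mul (6*a1^3))
  refine h.congr_deriv (Eq.symm ?_)
  unfold F4; push_cast; ring

lemma hasDerivAt_Gb (hb : 0 < b) (hs : 0 ≤ s) : HasDerivAt (Gb b) (G1 b s) s := by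
  have h4s : HasDerivAt (fun t : ℝ => 4*t) 4 s := by
    simpa using (hasDerivAt_id s).const_mul 4
  have h := ((hasDerivAt_F1 hb hs).const_mul 14).add (h4s.mul (hasDerivAt_F2 hb hs))
  refine h.congr_deriv (Eq.symm ?_)
  unfold G1; push_cast; ring

lemma hasDerivAt_G1 (hb : 0 < b) (hs : 0 ≤ s) : HasDerivAt (G1 b) (G2 b s) s := by
  have h4s : HasDerivAt (fun t : ℝ => 4*t) 4 s := by
    simpa using (hasDerivAt_id s).const_mul 4
  have h := ((hasDerivAt_F2 hb hs).const_mul 18).add (h4s.mul (hasDerivAt_F3 hb hs))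
  refine h.congr_deriv (Eq.symm ?_)
  unfold G2; push_cast; ring

lemma contDiffAt_Fb (hb : 0 < b) (hs : 0 ≤ s) : ContDiffAt ℝ 2 (Fb b) s := by
  unfold Fb
  exact ((contDiffAt_P b hb 1 hs).neg).add (contDiffAt_P a2 a2_pos 1 hs)

lemma contDiffAt_Gb (hb : 0 < b) (hs : 0 ≤ s) : ContDiffAt ℝ 2 (Gb b) s := by
  unfold Gb F1 F2
  have h2b := contDiffAt_P b hb 2 hs
  have h2a := contDiffAt_P a2 a2_pos 2 hs
  have h3b := contDiffAt_P b hb 3 hs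
  have h3a := contDiffAt_P a2 a2_pos 3 hs
  exact (contDiffAt_const.mul ((contDiffAt_const.mul h2b).sub (contDiffAt_const.mul h2a))).add
    ((contDiffAt_const.mul contDiffAt_id).mul
      (((contDiffAt_const.mul h3b).neg).add (contDiffAt_const.mul h3a)))

lemma lap_Fb (hb : 0 < b) (x : E7) :
    lap (fun y => Fb b (‖y‖^2)) x = Gb b (‖x‖^2) := by
  rw [lap_radial (Fb b) (F1 b) (F2 b) (fun s hs => hasDerivAt_Fb hb hs)
    (fun s hs => hasDerivAt_F1 hb hs) (fun s hs => contDiffAt_Fb hb hs) x]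
  unfold Gb; ring

lemma lap_lap_Fb (hb : 0 < b) (x : E7) :
    lap (lap (fun y => Fb b (‖y‖^2))) x = Kb b (‖x‖^2) := by
  rw [show lap (fun y => Fb b (‖y‖^2)) = fun y => Gb b (‖y‖^2) from funext (lap_Fb hb)]
  rw [lap_radial (Gb b) (G1 b) (G2 b) (fun s hs => hasDerivAt_Gb hb hs)
    (fun s hs => hasDerivAt_G1 hb hs) (fun s hs => contDiffAt_Gb hb hs) x]
  unfold Kb; ring
def cl : ℝ := min a1 ((2/3)*a2)
def cu : ℝ := max a1 (2*a2)

lemma cl_pos : 0 < cl := lt_min a1_pos (by have := a2_pos; linarith)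
lemma cu_pos : 0 < cu := lt_of_lt_of_le a1_pos (le_max_left _ _)

def Jcc : Set ℝ := Icc ((2/3)*a2) (2*a2)

lemma b_pos (hb : b ∈ Jcc) : 0 < b := by
  have := a2_pos; have h := hb.1; unfold Jcc at *; simp [Icc] at h ⊢; linarith [hb.1]

lemma low_b (hb : b ∈ Jcc) (hs : 0 ≤ s) : cl*(1+s) ≤ a1*s + b := by
  have h1 : cl ≤ a1 := min_le_left _ _
  have h2 : cl ≤ (2/3)*a2 := min_le_right _ _
  have := hb.1; nlinarith

lemma low_a2 (hs : 0 ≤ s) : cl*(1+s) ≤ a1*s + a2 := by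
  have h1 : cl ≤ a1 := min_le_left _ _
  have h2 : cl ≤ (2/3)*a2 := min_le_right _ _
  have := a2_pos; nlinarith

lemma up_b (hb : b ∈ Jcc) (hs : 0 ≤ s) : a1*s + b ≤ cu*(1+s) := by
  have h1 : a1 ≤ cu := le_max_left _ _
  have h2 : 2*a2 ≤ cu := le_max_right _ _
  have := hb.2; nlinarith

lemma up_a2 (hs : 0 ≤ s) : a1*s + a2 ≤ cu*(1+s) := by
  have h1 : a1 ≤ cu := le_max_left _ _
  have h2 : 2*a2 ≤ cu := le_max_right _ _
  have := a2_pos; nlinarith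

/-- the constant in the difference bound -/
def Cd (k : ℕ) : ℝ := k * cu^(k-1) / cl^(2*k)

lemma Cd_pos {k : ℕ} (hk : 1 ≤ k) : 0 < Cd k := by
  have := cl_pos; have := cu_pos
  have hk' : 0 < (k:ℝ) := by exact_mod_cast hk
  unfold Cd; positivity

lemma Pdiff {k : ℕ} (hk : 1 ≤ k) (hb : b ∈ Jcc) (hs : 0 ≤ s) :
    |P b k s - P a2 k s| ≤ Cd k * |b - a2| * ((1+s)^(k+1))⁻¹ := by
  obtain ⟨m, rfl⟩ : ∃ m, k = m + 1 := ⟨k - 1, by omega⟩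
  set A := a1*s + b with hA
  set B := a1*s + a2 with hB
  have h1s : (0:ℝ) < 1+s := by linarith
  have hcls : (0:ℝ) < cl*(1+s) := mul_pos cl_pos h1s
  have hcus : (0:ℝ) < cu*(1+s) := mul_pos cu_pos h1s
  have hA0 : 0 < A := lt_of_lt_of_le hcls (low_b hb hs)
  have hB0 : 0 < B := lt_of_lt_of_le hcls (low_a2 hs)
  have hAl := low_b hb hs
  have hBl := low_a2 hs
  have hAu := up_b hb hs
  have hBu := up_a2 hs
  have step1 : P b (m+1) s - P a2 (m+1) s = (B^(m+1) - A^(m+1)) * (A^(m+1) * B^(m+1))⁻¹ := by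
    unfold P
    rw [← hA, ← hB]
    field_simp
  have step2 : |B^(m+1) - A^(m+1)| ≤ ((m:ℝ)+1) * (cu*(1+s))^m * |b - a2| := by
    have hfact : B^(m+1) - A^(m+1)
        = (∑ i ∈ Finset.range (m+1), B^i * A^(m - i)) * (B - A) := by
      have := geom_sum₂_mul B A (m+1)
      simpa using this.symm
    rw [hfact, abs_mul]
    have hBA : |B - A| = |b - a2| := by
      rw [show B - A = -(b - a2) by rw [hA, hB]; ring, abs_neg]
    rw [hBA]
    have hsum : |∑ i ∈ Finset.range (m+1), B^i * A^(m - i)| ≤ ((m:ℝ)+1) * (cu*(1+s))^m := by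
      calc |∑ i ∈ Finset.range (m+1), B^i * A^(m - i)|
          ≤ ∑ i ∈ Finset.range (m+1), |B^i * A^(m - i)| := Finset.abs_sum_le_sum_abs _ _
        _ ≤ ∑ _i ∈ Finset.range (m+1), (cu*(1+s))^m := by
            apply Finset.sum_le_sum
            intro i hi
            rw [Finset.mem_range] at hi
            have hi' : i ≤ m := by omega
            rw [abs_mul, abs_of_pos (pow_pos hB0 i), abs_of_pos (pow_pos hA0 (m - i))]
            calc B^i * A^(m-i) ≤ (cu*(1+s))^i * (cu*(1+s))^(m-i) := by
                  apply mul_le_mul (pow_le_pow_left₀ hB0.le hBu i)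
                    (pow_le_pow_left₀ hA0.le hAu (m-i)) (pow_pos hA0 _).le (pow_nonneg hcus.le _)
              _ = (cu*(1+s))^m := by rw [← pow_add]; congr 1; omega
        _ = ((m:ℝ)+1) * (cu*(1+s))^m := by
            rw [Finset.sum_const, Finset.card_range, nsmul_eq_mul]
            push_cast
            ring
    exact mul_le_mul_of_nonneg_right hsum (abs_nonneg _)
  have step3 : (A^(m+1) * B^(m+1))⁻¹ ≤ (cl^(2*(m+1)) * (1+s)^(2*(m+1)))⁻¹ := by
    apply inv_anti₀ (mul_pos (pow_pos cl_pos _) (pow_pos h1s _))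
    calc cl^(2*(m+1)) * (1+s)^(2*(m+1)) = (cl*(1+s))^(m+1) * (cl*(1+s))^(m+1) := by
          rw [show 2*(m+1) = (m+1)+(m+1) by ring, pow_add, pow_add, mul_pow]
          ring
      _ ≤ A^(m+1) * B^(m+1) := by
          apply mul_le_mul (pow_le_pow_left₀ hcls.le hAl _)
            (pow_le_pow_left₀ hcls.le hBl _) (pow_nonneg hcls.le _) (pow_pos hA0 _).le
  calc |P b (m+1) s - P a2 (m+1) s|
      = |B^(m+1) - A^(m+1)| * (A^(m+1) * B^(m+1))⁻¹ := by
        rw [step1, abs_mul, abs_inv,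
          abs_of_pos (mul_pos (pow_pos hA0 (m+1)) (pow_pos hB0 (m+1)))]
    _ ≤ (((m:ℝ)+1) * (cu*(1+s))^m * |b - a2|) * (cl^(2*(m+1)) * (1+s)^(2*(m+1)))⁻¹ := by
        apply mul_le_mul step2 step3 (inv_nonneg.mpr (by positivity))
          (by positivity : (0:ℝ) ≤ ((m:ℝ)+1) * (cu*(1+s))^m * |b - a2|)
    _ = Cd (m+1) * |b - a2| * ((1+s)^(m+1+1))⁻¹ := by
        unfold Cd
        have h1s' : (1+s) ≠ 0 := by linarith
        have hcl : cl ≠ 0 := cl_pos.ne'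
        simp only [Nat.add_sub_cancel, Nat.cast_add, Nat.cast_one]
        rw [mul_pow]
        field_simp
        ring
lemma inv_onep_pow_anti (hs : 0 ≤ s) {n m : ℕ} (h : n ≤ m) : ((1+s)^m)⁻¹ ≤ ((1+s)^n)⁻¹ :=
  inv_anti₀ (pow_pos (by linarith) n) (pow_le_pow_right₀ (by linarith) h)

lemma s_shift (hs : 0 ≤ s) (n : ℕ) : s * ((1+s)^(n+1))⁻¹ ≤ ((1+s)^n)⁻¹ := by
  have h1s : (0:ℝ) < 1+s := by linarith
  calc s * ((1+s)^(n+1))⁻¹ ≤ (1+s) * ((1+s)^(n+1))⁻¹ :=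
        mul_le_mul_of_nonneg_right (by linarith) (inv_nonneg.mpr (pow_nonneg h1s.le _))
    _ = ((1+s)^n)⁻¹ := by rw [pow_succ]; field_simp

lemma s2_shift (hs : 0 ≤ s) (n : ℕ) : s^2 * ((1+s)^(n+2))⁻¹ ≤ ((1+s)^n)⁻¹ := by
  have h1s : (0:ℝ) < 1+s := by linarith
  calc s^2 * ((1+s)^(n+2))⁻¹ ≤ (1+s)^2 * ((1+s)^(n+2))⁻¹ :=
        mul_le_mul_of_nonneg_right (by nlinarith) (inv_nonneg.mpr (pow_nonneg h1s.le _))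
    _ = ((1+s)^n)⁻¹ := by
        rw [pow_add]
        field_simp

def CGb : ℝ := 14*a1*Cd 2 + 8*a1^2*Cd 3
def CKb : ℝ := 504*a1^2*Cd 3 + 864*a1^3*Cd 4 + 384*a1^4*Cd 5

lemma CGb_pos : 0 < CGb := by
  have h2 := Cd_pos (k := 2) (by norm_num)
  have h3 := Cd_pos (k := 3) (by norm_num)
  have := a1_pos
  unfold CGb; positivity

lemma CKb_pos : 0 < CKb := by
  have h3 := Cd_pos (k := 3) (by norm_num)
  have h4 := Cd_pos (k := 4) (by norm_num)
  have h5 := Cd_pos (k := 5) (by norm_num)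
  have := a1_pos
  unfold CKb; positivity

lemma F1_bound (hb : b ∈ Jcc) (hs : 0 ≤ s) :
    |F1 b s| ≤ a1 * (Cd 2 * |b - a2| * ((1+s)^3)⁻¹) := by
  have hD := Pdiff (show 1 ≤ 2 by norm_num) hb hs
  norm_num at hD
  rw [show F1 b s = a1 * (P b 2 s - P a2 2 s) by unfold F1; ring, abs_mul,
    abs_of_pos a1_pos]
  exact mul_le_mul_of_nonneg_left hD a1_pos.le

lemma F2_bound (hb : b ∈ Jcc) (hs : 0 ≤ s) :
    |F2 b s| ≤ 2*a1^2 * (Cd 3 * |b - a2| * ((1+s)^4)⁻¹) := by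
  have hD := Pdiff (show 1 ≤ 3 by norm_num) hb hs
  norm_num at hD
  rw [show F2 b s = (2*a1^2) * (P a2 3 s - P b 3 s) by unfold F2; ring, abs_mul,
    abs_of_pos (by have := a1_pos; positivity : (0:ℝ) < 2*a1^2), abs_sub_comm]
  exact mul_le_mul_of_nonneg_left hD (by have := a1_pos; positivity)

lemma F3_bound (hb : b ∈ Jcc) (hs : 0 ≤ s) :
    |F3 b s| ≤ 6*a1^3 * (Cd 4 * |b - a2| * ((1+s)^5)⁻¹) := by
  have hD := Pdiff (show 1 ≤ 4 by norm_num) hb hs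
  norm_num at hD
  rw [show F3 b s = (6*a1^3) * (P b 4 s - P a2 4 s) by unfold F3; ring, abs_mul,
    abs_of_pos (by have := a1_pos; positivity : (0:ℝ) < 6*a1^3)]
  exact mul_le_mul_of_nonneg_left hD (by have := a1_pos; positivity)

lemma F4_bound (hb : b ∈ Jcc) (hs : 0 ≤ s) :
    |F4 b s| ≤ 24*a1^4 * (Cd 5 * |b - a2| * ((1+s)^6)⁻¹) := by
  have hD := Pdiff (show 1 ≤ 5 by norm_num) hb hs
  norm_num at hD
  rw [show F4 b s = (24*a1^4) * (P a2 5 s - P b 5 s) by unfold F4; ring, abs_mul,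
    abs_of_pos (by have := a1_pos; positivity : (0:ℝ) < 24*a1^4), abs_sub_comm]
  exact mul_le_mul_of_nonneg_left hD (by have := a1_pos; positivity)

lemma Gb_bound (hb : b ∈ Jcc) (hs : 0 ≤ s) :
    |Gb b s| ≤ CGb * |b - a2| * ((1+s)^3)⁻¹ := by
  have ha1 := a1_pos
  have hΔ : (0:ℝ) ≤ |b - a2| := abs_nonneg _
  have hCd3 := (Cd_pos (k := 3) (by norm_num)).le
  have t0 : |Gb b s| ≤ 14*|F1 b s| + 4*s*|F2 b s| := by
    unfold Gb
    calc |14*F1 b s + 4*s*F2 b s| ≤ |14*F1 b s| + |4*s*F2 b s| := abs_add_le _ _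
      _ = 14*|F1 b s| + 4*s*|F2 b s| := by
          rw [abs_mul, abs_mul, abs_mul, abs_of_nonneg hs]
          norm_num
  have t1 : 14*|F1 b s| ≤ 14*(a1 * (Cd 2 * |b - a2| * ((1+s)^3)⁻¹)) := by
    linarith [F1_bound hb hs]
  have t2 : 4*s*|F2 b s| ≤ 8*a1^2*Cd 3*|b - a2| * ((1+s)^3)⁻¹ := by
    calc 4*s*|F2 b s| ≤ 4*s*(2*a1^2 * (Cd 3 * |b - a2| * ((1+s)^4)⁻¹)) :=
          mul_le_mul_of_nonneg_left (F2_bound hb hs) (by linarith)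
      _ = 8*a1^2*Cd 3*|b - a2| * (s*((1+s)^4)⁻¹) := by ring
      _ ≤ 8*a1^2*Cd 3*|b - a2| * ((1+s)^3)⁻¹ := by
          apply mul_le_mul_of_nonneg_left (s_shift hs 3)
          positivity
  calc |Gb b s| ≤ 14*|F1 b s| + 4*s*|F2 b s| := t0
    _ ≤ 14*(a1 * (Cd 2 * |b - a2| * ((1+s)^3)⁻¹)) + 8*a1^2*Cd 3*|b - a2| * ((1+s)^3)⁻¹ := by
        linarith
    _ = CGb * |b - a2| * ((1+s)^3)⁻¹ := by unfold CGb; ring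

lemma Kb_bound (hb : b ∈ Jcc) (hs : 0 ≤ s) :
    |Kb b s| ≤ CKb * |b - a2| * ((1+s)^3)⁻¹ := by
  have ha1 := a1_pos
  have hΔ : (0:ℝ) ≤ |b - a2| := abs_nonneg _
  have hCd3 := (Cd_pos (k := 3) (by norm_num)).le
  have hCd4 := (Cd_pos (k := 4) (by norm_num)).le
  have hCd5 := (Cd_pos (k := 5) (by norm_num)).le
  have t0 : |Kb b s| ≤ 252*|F2 b s| + 144*s*|F3 b s| + 16*s^2*|F4 b s| := by
    have hKb : Kb b s = 252*F2 b s + (144*s*F3 b s + 16*s^2*F4 b s) := by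
      unfold Kb G1 G2; ring
    rw [hKb]
    calc |252*F2 b s + (144*s*F3 b s + 16*s^2*F4 b s)|
        ≤ |252*F2 b s| + (|144*s*F3 b s| + |16*s^2*F4 b s|) :=
          (abs_add_le _ _).trans (by gcongr; exact abs_add_le _ _)
      _ = 252*|F2 b s| + (144*s*|F3 b s| + 16*s^2*|F4 b s|) := by
          rw [abs_mul, abs_mul, abs_mul, abs_mul, abs_mul, abs_of_nonneg hs,
            abs_of_nonneg (sq_nonneg s)]
          norm_num
      _ = 252*|F2 b s| + 144*s*|F3 b s| + 16*s^2*|F4 b s| := by ring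
  have u1 : 252*|F2 b s| ≤ 504*a1^2*Cd 3*|b - a2| * ((1+s)^3)⁻¹ := by
    calc 252*|F2 b s| ≤ 252*(2*a1^2 * (Cd 3 * |b - a2| * ((1+s)^4)⁻¹)) := by
          linarith [F2_bound hb hs]
      _ = 504*a1^2*Cd 3*|b - a2| * ((1+s)^4)⁻¹ := by ring
      _ ≤ 504*a1^2*Cd 3*|b - a2| * ((1+s)^3)⁻¹ := by
          apply mul_le_mul_of_nonneg_left (inv_onep_pow_anti hs (by norm_num)) (by positivity)
  have u2 : 144*s*|F3 b s| ≤ 864*a1^3*Cd 4*|b - a2| * ((1+s)^3)⁻¹ := by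
    calc 144*s*|F3 b s| ≤ 144*s*(6*a1^3 * (Cd 4 * |b - a2| * ((1+s)^5)⁻¹)) :=
          mul_le_mul_of_nonneg_left (F3_bound hb hs) (by linarith)
      _ = 864*a1^3*Cd 4*|b - a2| * (s*((1+s)^5)⁻¹) := by ring
      _ ≤ 864*a1^3*Cd 4*|b - a2| * ((1+s)^4)⁻¹ := by
          apply mul_le_mul_of_nonneg_left (s_shift hs 4) (by positivity)
      _ ≤ 864*a1^3*Cd 4*|b - a2| * ((1+s)^3)⁻¹ := by
          apply mul_le_mul_of_nonneg_left (inv_onep_pow_anti hs (by norm_num)) (by positivity)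
  have u3 : 16*s^2*|F4 b s| ≤ 384*a1^4*Cd 5*|b - a2| * ((1+s)^3)⁻¹ := by
    calc 16*s^2*|F4 b s| ≤ 16*s^2*(24*a1^4 * (Cd 5 * |b - a2| * ((1+s)^6)⁻¹)) :=
          mul_le_mul_of_nonneg_left (F4_bound hb hs) (by positivity)
      _ = 384*a1^4*Cd 5*|b - a2| * (s^2*((1+s)^6)⁻¹) := by ring
      _ ≤ 384*a1^4*Cd 5*|b - a2| * ((1+s)^4)⁻¹ := by
          apply mul_le_mul_of_nonneg_left (s2_shift hs 4) (by positivity)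
      _ ≤ 384*a1^4*Cd 5*|b - a2| * ((1+s)^3)⁻¹ := by
          apply mul_le_mul_of_nonneg_left (inv_onep_pow_anti hs (by norm_num)) (by positivity)
  calc |Kb b s| ≤ 252*|F2 b s| + 144*s*|F3 b s| + 16*s^2*|F4 b s| := t0
    _ ≤ 504*a1^2*Cd 3*|b - a2| * ((1+s)^3)⁻¹ + 864*a1^3*Cd 4*|b - a2| * ((1+s)^3)⁻¹
        + 384*a1^4*Cd 5*|b - a2| * ((1+s)^3)⁻¹ := by linarith
    _ = CKb * |b - a2| * ((1+s)^3)⁻¹ := by unfold CKb; ring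
lemma eq_profile (T : ℝ) (hT : T ∈ Icc (1/2:ℝ) (3/2)) (x : E7) :
    T * Wprof (Real.sqrt T * ‖x‖) - Wprof ‖x‖ = Fb (a2/T) (‖x‖^2) := by
  have hT0 : 0 < T := by have := hT.1; linarith
  have hx2 : (0:ℝ) ≤ ‖x‖^2 := sq_nonneg _
  have hsq : (Real.sqrt T * ‖x‖)^2 = T * ‖x‖^2 := by
    rw [mul_pow, Real.sq_sqrt hT0.le]
  unfold Wprof Fb P
  rw [hsq]
  have h1 : 0 < a1*(T*‖x‖^2) + a2 := by
    have h := mul_nonneg a1_pos.le (mul_nonneg hT0.le hx2); have := a2_pos; linarith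
  have h2 : 0 < a1*‖x‖^2 + a2 := by
    have h := mul_nonneg a1_pos.le hx2; have := a2_pos; linarith
  have e1 : a1*‖x‖^2 + a2/T = (a1*(T*‖x‖^2) + a2)/T := by field_simp
  rw [pow_one, pow_one, e1, inv_div]
  rw [div_eq_mul_inv T (a1*(T*‖x‖^2) + a2)]
  field_simp
  ring


set_option maxHeartbeats 2000000 in
/-- Lipschitz dependence of the rescaled Weinkove profile on the blowup time:
there is `C > 0` with `‖T𝐖(√T|·|) − 𝐖(|·|)‖ ≤ C|T − 1|` for all `T ∈ [1/2, 3/2]`. -/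
theorem stmt18 :
    ∃ C : ℝ, 0 < C ∧ ∀ T : ℝ, T ∈ Icc (1/2 : ℝ) (3/2) →
      Hnorm (fun x => T * Wprof (Real.sqrt T * ‖x‖) - Wprof ‖x‖)
        ≤ ENNReal.ofReal (C * |T - 1|) := by
  have ha1 := a1_pos
  have ha2 := a2_pos
  have hCG := CGb_pos
  have hCK := CKb_pos
  have hfin : (Module.finrank ℝ E7 : ℝ) < 12 := by
    simp [finrank_euclideanSpace_fin]; norm_num
  have hint : Integrable (fun x : E7 => (1 + ‖x‖)^(-(12:ℝ))) := integrable_one_add_norm hfin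
  set I : ℝ≥0∞ := ∫⁻ x : E7, ENNReal.ofReal ((1 + ‖x‖)^(-(12:ℝ))) with hIdef
  have hIlt : I < ⊤ := hint.lintegral_lt_top
  obtain ⟨R, hR0, hIR⟩ : ∃ R : ℝ, 0 ≤ R ∧ I ≤ ENNReal.ofReal R :=
    ⟨I.toReal, ENNReal.toReal_nonneg, le_of_eq (ENNReal.ofReal_toReal hIlt.ne).symm⟩
  clear hIlt
  set C : ℝ := 16*a2*Real.sqrt ((CGb^2 + CKb^2)*(R+1)) + 1 with hCdef
  have hsqrt0 : 0 ≤ Real.sqrt ((CGb^2 + CKb^2)*(R+1)) := Real.sqrt_nonneg _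
  have hC0 : 0 < C := by nlinarith
  refine ⟨C, hC0, ?_⟩
  intro T hT
  have hT0 : 0 < T := by have := hT.1; linarith
  set b := a2/T with hbdef
  have hb0 : 0 < b := div_pos a2_pos hT0
  have hbJ : b ∈ Jcc := by
    constructor
    · rw [hbdef, le_div_iff₀ hT0]; nlinarith [hT.2]
    · rw [hbdef, div_le_iff₀ hT0]; nlinarith [hT.1]
  have hΔ : |b - a2| ≤ 2*a2*|T - 1| := by
    have hb' : b - a2 = (a2*(1-T))/T := by rw [hbdef]; field_simp
    rw [hb', abs_div, abs_mul, abs_of_pos a2_pos, abs_of_pos hT0,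
      show |1 - T| = |T - 1| from abs_sub_comm 1 T, div_le_iff₀ hT0]
    have hq : 0 ≤ (2*T - 1) * (a2 * |T-1|) :=
      mul_nonneg (by have := hT.1; linarith) (mul_nonneg ha2.le (abs_nonneg _))
    nlinarith [hq]
  have hΔ2 : (b - a2)^2 ≤ 4*a2^2*(T-1)^2 := by
    have h := mul_self_le_mul_self (abs_nonneg (b - a2)) hΔ
    calc (b - a2)^2 = |b - a2| * |b - a2| := by rw [← sq_abs (b - a2)]; ring
      _ ≤ (2*a2*|T-1|) * (2*a2*|T-1|) := h
      _ = 4*a2^2*(T-1)^2 := by rw [show (2*a2*|T-1|) * (2*a2*|T-1|) = 4*a2^2*(|T-1| * |T-1|) by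
            ring, abs_mul_abs_self]; ring
  -- rewrite the function radially
  have hfun : (fun x : E7 => T * Wprof (Real.sqrt T * ‖x‖) - Wprof ‖x‖)
      = fun y : E7 => Fb b (‖y‖^2) := funext fun x => eq_profile T hT x
  rw [hfun]
  -- pointwise squared bound
  have key : ∀ (Cc : ℝ), 0 ≤ Cc → ∀ g : ℝ → ℝ,
      (∀ s, 0 ≤ s → |g s| ≤ Cc * |b - a2| * ((1+s)^3)⁻¹) →
      ∀ x : E7, (g (‖x‖^2))^2 ≤ 64 * Cc^2 * (b-a2)^2 * (1+‖x‖)^(-(12:ℝ)) := by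
    intro Cc hCc g hg x
    set r : ℝ := ‖x‖ with hrdef
    have hr0 : 0 ≤ r := norm_nonneg x
    have h1r : (0:ℝ) < 1 + r := by linarith
    have h1s : (0:ℝ) < 1 + r^2 := by positivity
    have hgs := hg (r^2) (sq_nonneg r)
    have hsq : (g (r^2))^2 ≤ (Cc * |b - a2|)^2 * (((1+r^2)^3)⁻¹)^2 := by
      have h := mul_self_le_mul_self (abs_nonneg _) hgs
      calc (g (r^2))^2 = |g (r^2)| * |g (r^2)| := by rw [← sq_abs (g (r^2))]; ring
        _ ≤ (Cc * |b - a2| * ((1+r^2)^3)⁻¹) * (Cc * |b - a2| * ((1+r^2)^3)⁻¹) := h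
        _ = (Cc * |b - a2|)^2 * (((1+r^2)^3)⁻¹)^2 := by ring
    have hpow : (((1+r^2)^3)⁻¹)^2 = ((1+r^2)^6)⁻¹ := by
      rw [← inv_pow, ← pow_mul, inv_pow]
    have hcmp : ((1+r^2)^6)⁻¹ ≤ 64 * (1+r)^(-(12:ℝ)) := by
      have hrp : (1+r)^(-(12:ℝ)) = ((1+r)^(12:ℕ))⁻¹ := by
        rw [Real.rpow_neg h1r.le, show ((12:ℝ)) = ((12:ℕ):ℝ) by norm_num,
          Real.rpow_natCast]
      rw [hrp]
      have h2 : (1+r)^2 ≤ 2*(1+r^2) := by nlinarith [sq_nonneg (r-1)]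
      have hXY : (1+r)^(12:ℕ) ≤ 64*(1+r^2)^6 := by
        calc (1+r)^(12:ℕ) = ((1+r)^2)^6 := by rw [← pow_mul]
          _ ≤ (2*(1+r^2))^6 := pow_le_pow_left₀ (by positivity) h2 6
          _ = 64*(1+r^2)^6 := by rw [mul_pow]; norm_num
      have hX : (0:ℝ) < (1+r^2)^6 := by positivity
      have hY : (0:ℝ) < (1+r)^(12:ℕ) := by positivity
      rw [inv_eq_one_div, show (64:ℝ)*((1+r)^(12:ℕ))⁻¹ = 64/(1+r)^(12:ℕ) by ring,
        div_le_div_iff₀ hX hY]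
      linarith
    calc (g (r^2))^2 ≤ (Cc * |b - a2|)^2 * ((1+r^2)^6)⁻¹ := by rw [← hpow]; exact hsq
      _ ≤ (Cc * |b - a2|)^2 * (64 * (1+r)^(-(12:ℝ))) := by
          apply mul_le_mul_of_nonneg_left hcmp (by positivity)
      _ = 64 * Cc^2 * (b-a2)^2 * (1+r)^(-(12:ℝ)) := by
          rw [mul_pow, sq_abs]; ring
  -- lintegral bounds
  have master : ∀ (Cc : ℝ), 0 ≤ Cc → ∀ g : E7 → ℝ,
      (∀ x : E7, (g x)^2 ≤ 64 * Cc^2 * (b-a2)^2 * (1+‖x‖)^(-(12:ℝ))) →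
      (∫⁻ x : E7, ENNReal.ofReal ((g x)^2)) ≤ ENNReal.ofReal (64 * Cc^2 * (b-a2)^2) * I := by
    intro Cc hCc g hg
    calc (∫⁻ x : E7, ENNReal.ofReal ((g x)^2))
        ≤ ∫⁻ x : E7, ENNReal.ofReal (64 * Cc^2 * (b-a2)^2 * (1+‖x‖)^(-(12:ℝ))) :=
          lintegral_mono fun x => ENNReal.ofReal_le_ofReal (hg x)
      _ = ∫⁻ x : E7, ENNReal.ofReal (64 * Cc^2 * (b-a2)^2)
            * ENNReal.ofReal ((1+‖x‖)^(-(12:ℝ))) := by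
          congr 1
          funext x
          rw [← ENNReal.ofReal_mul (by positivity)]
      _ = ENNReal.ofReal (64 * Cc^2 * (b-a2)^2) * I := by
          rw [lintegral_const_mul' _ _ ENNReal.ofReal_ne_top, hIdef]
  have hlapG : ∀ x : E7, lap (fun y => Fb b (‖y‖^2)) x = Gb b (‖x‖^2) := lap_Fb hb0
  have hlapK : ∀ x : E7, lap (lap (fun y => Fb b (‖y‖^2))) x = Kb b (‖x‖^2) := lap_lap_Fb hb0
  have int1 : (∫⁻ x : E7, ENNReal.ofReal ((lap (fun y => Fb b (‖y‖^2)) x)^2))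
      ≤ ENNReal.ofReal (64 * CGb^2 * (b-a2)^2) * I := by
    apply le_trans (le_of_eq (lintegral_congr fun x => by rw [hlapG x]))
    exact master CGb hCG.le (fun x => Gb b (‖x‖^2))
      (key CGb hCG.le (Gb b) (fun s hs => Gb_bound hbJ hs))
  have int2 : (∫⁻ x : E7, ENNReal.ofReal ((lap (lap (fun y => Fb b (‖y‖^2))) x)^2))
      ≤ ENNReal.ofReal (64 * CKb^2 * (b-a2)^2) * I := by
    apply le_trans (le_of_eq (lintegral_congr fun x => by rw [hlapK x]))
    exact master CKb hCK.le (fun x => Kb b (‖x‖^2))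
      (key CKb hCK.le (Kb b) (fun s hs => Kb_bound hbJ hs))
  have hHSq : HnormSq (fun y : E7 => Fb b (‖y‖^2)) ≤ ENNReal.ofReal ((C * |T-1|)^2) := by
    unfold HnormSq
    calc (∫⁻ x : E7, ENNReal.ofReal ((lap (fun y => Fb b (‖y‖^2)) x)^2))
          + (∫⁻ x : E7, ENNReal.ofReal ((lap (lap (fun y => Fb b (‖y‖^2))) x)^2))
        ≤ ENNReal.ofReal (64 * CGb^2 * (b-a2)^2) * I
          + ENNReal.ofReal (64 * CKb^2 * (b-a2)^2) * I := add_le_add int1 int2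
      _ = ENNReal.ofReal (64 * (CGb^2 + CKb^2) * (b-a2)^2) * I := by
          rw [← add_mul, ← ENNReal.ofReal_add (by positivity) (by positivity)]
          congr 2
          ring
      _ ≤ ENNReal.ofReal (64 * (CGb^2 + CKb^2) * (b-a2)^2) * ENNReal.ofReal R :=
          mul_le_mul_right hIR _
      _ = ENNReal.ofReal (64 * (CGb^2 + CKb^2) * (b-a2)^2 * R) := by
          rw [← ENNReal.ofReal_mul (by positivity)]
      _ ≤ ENNReal.ofReal ((C * |T-1|)^2) := by
          apply ENNReal.ofReal_le_ofReal
          have hCsq : Real.sqrt ((CGb^2 + CKb^2)*(R+1)) ^ 2 = (CGb^2 + CKb^2)*(R+1) :=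
            Real.sq_sqrt (by positivity)
          have h1 : 256*a2^2*((CGb^2 + CKb^2)*(R+1)) ≤ C^2 := by nlinarith
          have h2 : 64 * (CGb^2 + CKb^2) * (b-a2)^2 * R
              ≤ 256*a2^2*((CGb^2 + CKb^2)*(R+1))*(T-1)^2 := by
            nlinarith [mul_le_mul_of_nonneg_left hΔ2
              (by positivity : (0:ℝ) ≤ 64 * (CGb^2 + CKb^2) * R),
              sq_nonneg (T-1), sq_nonneg (b-a2)]
          have h3 := mul_le_mul_of_nonneg_right h1 (sq_nonneg (T-1))
          calc 64 * (CGb^2 + CKb^2) * (b-a2)^2 * R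
              ≤ 256*a2^2*((CGb^2 + CKb^2)*(R+1))*(T-1)^2 := h2
            _ ≤ C^2*(T-1)^2 := h3
            _ = (C * |T-1|)^2 := by rw [mul_pow, sq_abs]
  -- conclude
  have hmono := ENNReal.rpow_le_rpow hHSq (by norm_num : (0:ℝ) ≤ 1/2)
  have heq : (ENNReal.ofReal ((C * |T-1|)^2)) ^ ((1:ℝ)/2) = ENNReal.ofReal (C * |T-1|) := by
    rw [ENNReal.ofReal_rpow_of_nonneg (sq_nonneg _) (by norm_num)]
    congr 1
    rw [← Real.rpow_natCast (C * |T-1|) 2, ← Real.rpow_mul (by positivity)]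
    norm_num
  unfold Hnorm
  rw [← heq]
  exact hmono

end
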